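/- Fix an integer m ≥ 2. For q ≥ 1 let φ(q; i_1≠1) denote the number of sequences (i_1, …, i_q) with each i_k ∈ {1, …, m-1}, with i_1 ≠ 1, and with i_{k+1} ≠ i_k + 1 for all 1 ≤ k ≤ q-1, and set φ(0; i_1≠1) = 1. Then for every q ≥ 0, φ(q; i_1≠1) = Σ_{r=0}^{m-1} (-1)^r φ(q - r), where φ(k) = 0 for k < 0. -/
import Mathlib


/-- `phiNat m n` is the number of sequences `(i₁, …, iₙ)` with entries in `{1, …, m-1}`
(encoded as functions `Fin n → Fin m` with nonzero values) such that no entry is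
immediately followed by its successor. -/
noncomputable def phiNat (m n : ℕ) : ℕ :=
  Nat.card {f : Fin n → Fin m //
    (∀ k, 1 ≤ (f k : ℕ)) ∧
    ∀ (k : ℕ) (hk : k + 1 < n),
      (f ⟨k + 1, hk⟩ : ℕ) ≠ (f ⟨k, Nat.lt_of_succ_lt hk⟩ : ℕ) + 1}

/-- `phi m : ℤ → ℤ`, the rank function of the quadratic dual algebra `N_m(R)^!`,
vanishing on negative integers. -/
noncomputable def phi (m : ℕ) (n : ℤ) : ℤ :=
  if n < 0 then 0 else phiNat m n.toNat

/-- `phiNe1 m q` counts the sequences as in `phiNat m q` which moreover start with an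
entry different from `1` (with `phiNe1 m 0 = 1`). -/
noncomputable def phiNe1 (m q : ℕ) : ℕ :=
  Nat.card {f : Fin q → Fin m //
    (∀ k, 1 ≤ (f k : ℕ)) ∧
    (∀ h : 0 < q, (f ⟨0, h⟩ : ℕ) ≠ 1) ∧
    ∀ (k : ℕ) (hk : k + 1 < q),
      (f ⟨k + 1, hk⟩ : ℕ) ≠ (f ⟨k, Nat.lt_of_succ_lt hk⟩ : ℕ) + 1}

/-! Auxiliary development. -/

/-- The base condition: entries nonzero and no entry followed by its successor. -/
def Base (m q : ℕ) (f : Fin q → Fin m) : Prop :=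
  (∀ k, 1 ≤ (f k : ℕ)) ∧
    ∀ (k : ℕ) (hk : k + 1 < q),
      (f ⟨k + 1, hk⟩ : ℕ) ≠ (f ⟨k, Nat.lt_of_succ_lt hk⟩ : ℕ) + 1

/-- Count of base sequences with first entry ≠ j. -/
noncomputable def chi (m j q : ℕ) : ℕ :=
  Nat.card {f : Fin q → Fin m //
    Base m q f ∧ ∀ h : 0 < q, (f ⟨0, h⟩ : ℕ) ≠ j}

/-- Count of base sequences with first entry = j. -/
noncomputable def chiEq (m j q : ℕ) : ℕ :=
  Nat.card {f : Fin q → Fin m //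
    Base m q f ∧ ∀ h : 0 < q, (f ⟨0, h⟩ : ℕ) = j}

lemma phiNat_eq_card (m q : ℕ) :
    phiNat m q = Nat.card {f : Fin q → Fin m // Base m q f} := rfl

lemma phiNe1_eq_chi (m q : ℕ) : phiNe1 m q = chi m 1 q := by
  unfold phiNe1 chi Base
  exact Nat.card_congr (Equiv.subtypeEquivRight (fun f => by tauto))

lemma phi_natCast (m q : ℕ) : phi m (q : ℤ) = phiNat m q := by
  simp [phi]

lemma phi_neg (m : ℕ) {n : ℤ} (h : n < 0) : phi m n = 0 := if_pos h

lemma base_zero (m : ℕ) (f : Fin 0 → Fin m) : Base m 0 f :=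
  ⟨fun k => k.elim0, fun k hk => absurd hk (by omega)⟩

lemma chi_zero (m j : ℕ) : chi m j 0 = 1 := by
  rw [chi, Nat.card_eq_one_iff_unique]
  constructor
  · refine ⟨fun a b => ?_⟩
    ext k; exact k.elim0
  · exact ⟨⟨fun k => k.elim0, base_zero m _, fun h => absurd h (by omega)⟩⟩

lemma phiNat_zero (m : ℕ) : phiNat m 0 = 1 := by
  rw [phiNat_eq_card, Nat.card_eq_one_iff_unique]
  constructor
  · refine ⟨fun a b => ?_⟩
    ext k; exact k.elim0
  · exact ⟨⟨fun k => k.elim0, base_zero m _⟩⟩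

/-- When `j = m`, the first-entry condition is vacuous. -/
lemma chi_top (m q : ℕ) : chi m m q = phiNat m q := by
  rw [phiNat_eq_card, chi]
  refine Nat.card_congr (Equiv.subtypeEquivRight (fun f => ?_))
  constructor
  · exact fun h => h.1
  · exact fun h => ⟨h, fun hq => Nat.ne_of_lt (f ⟨0, hq⟩).isLt⟩

open Classical in
lemma split (m j q : ℕ) (hq : 0 < q) :
    phiNat m q = chi m j q + chiEq m j q := by
  rw [phiNat_eq_card, chi, chiEq]
  have e1 : {f : Fin q → Fin m // Base m q f} ≃
      {x : {f : Fin q → Fin m // Base m q f} // ((x.1 ⟨0, hq⟩ : Fin m) : ℕ) ≠ j} ⊕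
      {x : {f : Fin q → Fin m // Base m q f} // ¬ ((x.1 ⟨0, hq⟩ : Fin m) : ℕ) ≠ j} :=
    (Equiv.sumCompl _).symm
  have e2 : {x : {f : Fin q → Fin m // Base m q f} // ((x.1 ⟨0, hq⟩ : Fin m) : ℕ) ≠ j} ≃
      {f : Fin q → Fin m // Base m q f ∧ ∀ h : 0 < q, (f ⟨0, h⟩ : ℕ) ≠ j} :=
    (Equiv.subtypeSubtypeEquivSubtypeInter (Base m q)
        (fun f => ((f ⟨0, hq⟩ : Fin m) : ℕ) ≠ j)).trans
      (Equiv.subtypeEquivRight (fun f => by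
        constructor
        · exact fun h => ⟨h.1, fun _ => h.2⟩
        · exact fun h => ⟨h.1, h.2 hq⟩))
  have e3 : {x : {f : Fin q → Fin m // Base m q f} // ¬ ((x.1 ⟨0, hq⟩ : Fin m) : ℕ) ≠ j} ≃
      {f : Fin q → Fin m // Base m q f ∧ ∀ h : 0 < q, (f ⟨0, h⟩ : ℕ) = j} :=
    (Equiv.subtypeSubtypeEquivSubtypeInter (Base m q)
        (fun f => ¬ ((f ⟨0, hq⟩ : Fin m) : ℕ) ≠ j)).trans
      (Equiv.subtypeEquivRight (fun f => by
        constructor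
        · exact fun h => ⟨h.1, fun _ => not_not.mp h.2⟩
        · exact fun h => ⟨h.1, not_not.mpr (h.2 hq)⟩))
  rw [Nat.card_congr e1, Nat.card_sum, Nat.card_congr e2, Nat.card_congr e3]

/-- Dropping the first entry. -/
lemma drop (m j n : ℕ) (hj1 : 1 ≤ j) (hjm : j < m) :
    chiEq m j (n + 1) = chi m (j + 1) n := by
  rw [chiEq, chi]
  refine Nat.card_congr ⟨fun x => ⟨fun k => x.1 k.succ, ?_⟩,
    fun y => ⟨Fin.cons ⟨j, hjm⟩ y.1, ?_⟩, ?_, ?_⟩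
  · obtain ⟨f, ⟨h1, h2⟩, h0⟩ := x
    refine ⟨⟨fun k => h1 k.succ, fun k hk => h2 (k + 1) (Nat.succ_lt_succ hk)⟩,
      fun hn => ?_⟩
    have h2' := h2 0 (Nat.succ_lt_succ hn)
    have h00 : ((f ⟨0, Nat.lt_of_succ_lt (Nat.succ_lt_succ hn)⟩ : Fin m) : ℕ) = j :=
      h0 (Nat.succ_pos n)
    rw [h00] at h2'
    exact h2'
  · obtain ⟨g, ⟨h1, h2⟩, h0⟩ := y
    refine ⟨⟨fun k => ?_, fun k hk => ?_⟩, fun _ => rfl⟩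
    · refine Fin.cases ?_ ?_ k
      · simpa using hj1
      · intro i; simpa using h1 i
    · rcases Nat.eq_zero_or_pos k with rfl | hk0
      · have hn : 0 < n := by omega
        have e : (⟨0 + 1, hk⟩ : Fin (n + 1)) = (⟨0, hn⟩ : Fin n).succ := rfl
        rw [e, Fin.cons_succ]
        simpa using h0 hn
      · obtain ⟨k', rfl⟩ := Nat.exists_eq_add_of_le hk0
        have hk' : k' + 1 < n := by omega
        have e1 : (⟨1 + k' + 1, hk⟩ : Fin (n + 1)) = (⟨k' + 1, hk'⟩ : Fin n).succ := by
          ext; simp; omega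
        have e2 : (⟨1 + k', Nat.lt_of_succ_lt hk⟩ : Fin (n + 1)) =
            (⟨k', Nat.lt_of_succ_lt hk'⟩ : Fin n).succ := by
          ext; simp; omega
        rw [e1, e2, Fin.cons_succ, Fin.cons_succ]
        exact h2 k' hk'
  · rintro ⟨f, ⟨h1, h2⟩, h0⟩
    ext k
    refine Fin.cases ?_ ?_ k
    · simp only [Fin.cons_zero]
      exact (h0 (Nat.succ_pos n)).symm
    · intro i; simp [Fin.cons_succ]
  · rintro ⟨g, hg⟩
    ext k
    simp [Fin.cons_succ]

lemma chi_sum (m : ℕ) (hm : 1 ≤ m) :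
    ∀ q j, 1 ≤ j → j ≤ m →
      (chi m j q : ℤ) = ∑ r ∈ Finset.range (m - j + 1), (-1 : ℤ) ^ r * phi m ((q : ℤ) - r) := by
  intro q
  induction q with
  | zero =>
    intro j hj1 hjm
    rw [chi_zero, Finset.sum_eq_single 0]
    · simp [phi, phiNat_zero]
    · intro r _ hr
      rw [phi_neg m (by omega)]
      ring
    · intro h; simp at h
  | succ n ih =>
    intro j hj1 hjm
    rcases eq_or_lt_of_le hjm with rfl | hlt
    · rw [chi_top]
      have h1 : j - j + 1 = 1 := by omega
      rw [h1, Finset.sum_range_one]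
      have : ((n : ℤ) + 1 - (0 : ℕ)) = ((n + 1 : ℕ) : ℤ) := by push_cast; ring
      simp only [Nat.cast_add, Nat.cast_one, Nat.cast_zero, sub_zero, pow_zero, one_mul]
      rw [show ((n : ℤ) + 1) = ((n + 1 : ℕ) : ℤ) by push_cast; ring, phi_natCast]
    · -- j < m
      have hsplit := split m j (n + 1) (Nat.succ_pos n)
      have hdrop := drop m j n hj1 hlt
      have hIH := ih (j + 1) (by omega) (by omega)
      have hchi : (chi m j (n + 1) : ℤ) = (phiNat m (n + 1) : ℤ) - chi m (j + 1) n := by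
        rw [hsplit, hdrop]; push_cast; ring
      rw [hchi, hIH]
      have hN : m - j + 1 = (m - (j + 1) + 1) + 1 := by omega
      rw [hN]
      conv_rhs => rw [Finset.sum_range_succ']
      have hterm : ∀ r ∈ Finset.range (m - (j + 1) + 1),
          (-1 : ℤ) ^ (r + 1) * phi m (((n + 1 : ℕ) : ℤ) - (r + 1 : ℕ)) =
            -((-1 : ℤ) ^ r * phi m ((n : ℤ) - r)) := by
        intro r _
        have h2 : (((n + 1 : ℕ) : ℤ) - (r + 1 : ℕ)) = (n : ℤ) - r := by push_cast; ring
        rw [h2, pow_succ]; ring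
      rw [Finset.sum_congr rfl hterm, Finset.sum_neg_distrib]
      have hlast : ((-1 : ℤ) ^ 0 * phi m (((n + 1 : ℕ) : ℤ) - (0 : ℕ))) =
          (phiNat m (n + 1) : ℤ) := by
        simp only [pow_zero, Nat.cast_zero, sub_zero, one_mul, phi_natCast]
      rw [hlast]
      ring

/-- **Lemma (Itagaki–Nakamoto–Torii).**
For every `q ≥ 0`, `φ(q; i₁ ≠ 1) = ∑_{r=0}^{m-1} (-1)^r φ(q - r)`. -/
theorem stmt_6 (m : ℕ) (hm : 2 ≤ m) (q : ℕ) :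
    (phiNe1 m q : ℤ) = ∑ r ∈ Finset.range m, (-1 : ℤ) ^ r * phi m ((q : ℤ) - (r : ℤ)) := by
  rw [phiNe1_eq_chi, chi_sum m (by omega) q 1 le_rfl (by omega),
    show m - 1 + 1 = m from by omega]
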